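/- arXiv:2104.13731 — 2 statements merged into one kernel-verified Lean document; each statement's English description precedes it below -/
import Mathlib

section
/- With nodes ξ¹ = -1/2, ξ² = 5/8, ξ³ = 7/8 and weights λ₁ = (2a² + A² - B²)/(2a²), λ₂ = λ₃ = 1/2, all three weights are positive and for every f in the linear span of f1 and f2, the integral of f² over [-1,1] equals λ₁·f(ξ¹)² + λ₂·f(ξ²)² + λ₃·f(ξ³)². -/
/-!
Every `f = c₁ • f1 + c₂ • f2` is constant on `[-1,0)`, `[0,1/4)`, `[1/4,1/2)`, `[1/2,3/4)`,
`[3/4,1]`, with values `c₂a, c₁ ± c₂A, c₁ ± c₂B`, so `∫ f² = c₂²a² + c₁² + c₂²(A² + B²)/2`.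
The nodes sample the pieces with values `c₂a, c₁ + c₂B, c₁ - c₂B`, and the quadrature sum is
`λ₁c₂²a² + c₁² + c₂²B²`; the two quadratic forms agree exactly for
`λ₁ = (2a² + A² - B²)/(2a²)`, which is positive once `A² > B²`.
-/

open MeasureTheory Set

noncomputable def f1 : ℝ → ℝ := fun x => if x < 0 then 0 else 1

noncomputable def f2 (a A B : ℝ) : ℝ → ℝ := fun x =>
  if x < 0 then a
  else if x < 1/4 then A
  else if x < 1/2 then -A
  else if x < 3/4 then B
  else -B

section StepFunction

variable {E : Type*} [NormedAddCommGroup E] {g : ℝ → E}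

theorem intervalIntegrable_of_eqOn_Ioo {u v : ℝ} {c : E} (huv : u ≤ v)
    (hg : EqOn g (fun _ ↦ c) (Ioo u v)) : IntervalIntegrable g volume u v := by
  rw [intervalIntegrable_iff_integrableOn_Ioo_of_le huv]
  exact (integrableOn_const measure_Ioo_lt_top.ne).congr_fun hg.symm measurableSet_Ioo

variable [NormedSpace ℝ E] [CompleteSpace E]

theorem intervalIntegral_of_eqOn_Ioo {u v : ℝ} {c : E} (huv : u ≤ v)
    (hg : EqOn g (fun _ ↦ c) (Ioo u v)) : ∫ x in u..v, g x = (v - u) • c := by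
  rw [intervalIntegral.integral_of_le huv, integral_Ioc_eq_integral_Ioo,
    setIntegral_congr_fun measurableSet_Ioo hg, setIntegral_const, measureReal_def,
    Real.volume_Ioo, ENNReal.toReal_ofReal (sub_nonneg.2 huv)]

theorem intervalIntegral_eq_sum_of_eqOn_Ioo {t : ℕ → ℝ} {c : ℕ → E} {n : ℕ}
    (ht : ∀ k < n, t k ≤ t (k + 1))
    (hg : ∀ k < n, EqOn g (fun _ ↦ c k) (Ioo (t k) (t (k + 1)))) :
    ∫ x in t 0..t n, g x = ∑ k ∈ Finset.range n, (t (k + 1) - t k) • c k := by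
  rw [← intervalIntegral.sum_integral_adjacent_intervals
    fun k hk ↦ intervalIntegrable_of_eqOn_Ioo (ht k hk) (hg k hk)]
  refine Finset.sum_congr rfl fun k hk ↦ ?_
  rw [Finset.mem_range] at hk
  exact intervalIntegral_of_eqOn_Ioo (ht k hk) (hg k hk)

end StepFunction

theorem integral_sq_smul_f1_add_smul_f2 (a A B c₁ c₂ : ℝ) :
    ∫ x in (-1:ℝ)..1, ((c₁ • f1 + c₂ • f2 a A B) x) ^ 2 =
      (c₂ * a) ^ 2 + ((c₁ + c₂ * A) ^ 2 + (c₁ - c₂ * A) ^ 2 + (c₁ + c₂ * B) ^ 2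
        + (c₁ - c₂ * B) ^ 2) / 4 := by
  let t : ℕ → ℝ := fun k ↦ [-1, 0, 1/4, 1/2, 3/4, 1].getD k 0
  let v : ℕ → ℝ := fun k ↦ [c₂ * a, c₁ + c₂ * A, c₁ - c₂ * A, c₁ + c₂ * B, c₁ - c₂ * B].getD k 0
  have ht : ∀ k < 5, t k ≤ t (k + 1) := by
    intro k hk
    interval_cases k <;> norm_num [t]
  have hv : ∀ k < 5, EqOn (c₁ • f1 + c₂ • f2 a A B) (fun _ ↦ v k) (Ioo (t k) (t (k + 1))) := by
    intro k hk x ⟨hx₁, hx₂⟩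
    interval_cases k <;> norm_num [t, v, f1, f2] at hx₁ hx₂ ⊢ <;> split_ifs <;> linarith
  calc ∫ x in (-1:ℝ)..1, ((c₁ • f1 + c₂ • f2 a A B) x) ^ 2
      = ∑ k ∈ Finset.range 5, (t (k + 1) - t k) • v k ^ 2 :=
        intervalIntegral_eq_sum_of_eqOn_Ioo ht fun k hk x hx ↦ congrArg (· ^ 2) (hv k hk hx)
    _ = _ := by
      norm_num [t, v, Finset.sum_range_succ]
      ring

theorem three_point_discretization_positive_weights_general (a A B : ℝ) (ha : 0 < a)
    (hcond : A ^ 2 > 2 * a ^ 2 + B ^ 2) :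
    0 < (2 * a ^ 2 + A ^ 2 - B ^ 2) / (2 * a ^ 2) ∧ (0:ℝ) < 1/2 ∧
    (∀ f ∈ Submodule.span ℝ ({f1, f2 a A B} : Set (ℝ → ℝ)),
      (∫ x in (-1:ℝ)..1, (f x) ^ 2) =
        (2 * a ^ 2 + A ^ 2 - B ^ 2) / (2 * a ^ 2) * (f (-1/2)) ^ 2
          + 1/2 * (f (5/8)) ^ 2 + 1/2 * (f (7/8)) ^ 2) := by
  refine ⟨div_pos (by nlinarith) (by positivity), by norm_num, fun f hf ↦ ?_⟩
  obtain ⟨c₁, c₂, rfl⟩ := Submodule.mem_span_pair.1 hf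
  rw [integral_sq_smul_f1_add_smul_f2]
  norm_num [f1, f2]
  field_simp
  ring

theorem three_point_discretization_positive_weights (a A B : ℝ) (ha : 0 < a) (hAB : B < A)
    (hB : 0 < B) (hcond : A ^ 2 > 2 * a ^ 2 + B ^ 2) :
    0 < (2 * a ^ 2 + A ^ 2 - B ^ 2) / (2 * a ^ 2) ∧ (0:ℝ) < 1/2 ∧
    (∀ f ∈ Submodule.span ℝ ({f1, f2 a A B} : Set (ℝ → ℝ)),
      (∫ x in (-1:ℝ)..1, (f x) ^ 2) =
        (2 * a ^ 2 + A ^ 2 - B ^ 2) / (2 * a ^ 2) * (f (-1/2)) ^ 2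
          + 1/2 * (f (5/8)) ^ 2 + 1/2 * (f (7/8)) ^ 2) :=
  three_point_discretization_positive_weights_general a A B ha hcond
end

section
/- Suppose nodes ξ¹, ξ² ∈ [-1,1] and weights λ₁, λ₂ ∈ ℝ satisfy: λ₁·f1(ξ¹)² + λ₂·f1(ξ²)² = 1, λ₁·f2(ξ¹)² + λ₂·f2(ξ²)² = a² + A²/2 + B²/2, and λ₁·f1(ξ¹)f2(ξ¹) + λ₂·f1(ξ²)f2(ξ²) = 0, with f1(ξ¹) = f1(ξ²) = 1 and f2(ξ¹) = -f2(ξ²). Then λ₁ = λ₂ = 1/2 and f2(ξ¹)² = a² + A²/2 + B²/2, which contradicts A² > 2a² + B² since f2 takes only the values ±A, ±B on [0,1]. -/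
open MeasureTheory Set

/-!
Since `f1 = 1` at both nodes, the weights sum to `1`; as `f2` takes opposite values `c` and `-c`
there, the second moment condition collapses to `c ^ 2 = a ^ 2 + A ^ 2 / 2 + B ^ 2 / 2`, and the
orthogonality condition forces equal weights. But on `[0, 1]` the square of `f2` is `A ^ 2` or
`B ^ 2`, and neither equals that average when `A ^ 2 > 2 a ^ 2 + B ^ 2`.
-/

lemma nonneg_of_f1_eq_one {x : ℝ} (h : f1 x = 1) : 0 ≤ x := by
  by_contra hx
  simp [f1, lt_of_not_ge hx] at h

lemma f2_sq_eq_or_of_nonneg (a A B : ℝ) {x : ℝ} (hx : 0 ≤ x) :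
    f2 a A B x ^ 2 = A ^ 2 ∨ f2 a A B x ^ 2 = B ^ 2 := by
  simp only [f2, if_neg (not_lt.mpr hx)]
  split_ifs <;> simp

lemma sq_eq_of_opposite_nodes {l₁ l₂ c S : ℝ} (hsum : l₁ + l₂ = 1)
    (h : l₁ * c ^ 2 + l₂ * (-c) ^ 2 = S) : c ^ 2 = S := by
  linear_combination h - c ^ 2 * hsum

lemma weights_eq_half_of_opposite_nodes {l₁ l₂ c : ℝ} (hsum : l₁ + l₂ = 1)
    (h : l₁ * c + l₂ * (-c) = 0) (hc : c ≠ 0) : l₁ = 1 / 2 ∧ l₂ = 1 / 2 := by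
  have hdiff : l₁ - l₂ = 0 := by
    refine (mul_eq_zero.mp ?_).resolve_right hc
    linear_combination h
  constructor <;> linarith

lemma sq_ne_average_of_lt {a A B x : ℝ} (hcond : A ^ 2 > 2 * a ^ 2 + B ^ 2)
    (hx : x = A ^ 2 ∨ x = B ^ 2) : x ≠ a ^ 2 + A ^ 2 / 2 + B ^ 2 / 2 := by
  rcases hx with rfl | rfl <;> intro h <;> nlinarith [sq_nonneg a]

theorem two_point_opposite_values_contradiction_general (a A B : ℝ)
    (hcond : A ^ 2 > 2 * a ^ 2 + B ^ 2)
    (ξ₁ ξ₂ : ℝ)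
    (l₁ l₂ : ℝ)
    (h1 : l₁ * (f1 ξ₁) ^ 2 + l₂ * (f1 ξ₂) ^ 2 = 1)
    (h2 : l₁ * (f2 a A B ξ₁) ^ 2 + l₂ * (f2 a A B ξ₂) ^ 2 = a ^ 2 + A ^ 2 / 2 + B ^ 2 / 2)
    (h3 : l₁ * f1 ξ₁ * f2 a A B ξ₁ + l₂ * f1 ξ₂ * f2 a A B ξ₂ = 0)
    (hv1 : f1 ξ₁ = 1) (hv2 : f1 ξ₂ = 1) (hopp : f2 a A B ξ₁ = -(f2 a A B ξ₂)) :
    l₁ = 1/2 ∧ l₂ = 1/2 ∧ (f2 a A B ξ₁) ^ 2 = a ^ 2 + A ^ 2 / 2 + B ^ 2 / 2 ∧ False := by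
  have hopp' : f2 a A B ξ₂ = -f2 a A B ξ₁ := by rw [hopp, neg_neg]
  rw [hv1, hv2, one_pow, mul_one, mul_one] at h1
  rw [hv1, hv2, mul_one, mul_one, hopp'] at h3
  rw [hopp'] at h2
  have hsq := sq_eq_of_opposite_nodes h1 h2
  have hc : f2 a A B ξ₁ ≠ 0 := by
    intro h0
    rw [h0] at hsq
    nlinarith [sq_nonneg a, sq_nonneg B]
  obtain ⟨hl₁, hl₂⟩ := weights_eq_half_of_opposite_nodes h1 h3 hc
  exact ⟨hl₁, hl₂, hsq, sq_ne_average_of_lt hcond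
    (f2_sq_eq_or_of_nonneg a A B (nonneg_of_f1_eq_one hv1)) hsq⟩

theorem two_point_opposite_values_contradiction (a A B : ℝ) (ha : 0 < a) (hAB : B < A)
    (hB : 0 < B) (hcond : A ^ 2 > 2 * a ^ 2 + B ^ 2)
    (ξ₁ ξ₂ : ℝ) (hξ₁ : ξ₁ ∈ Icc (-1:ℝ) 1) (hξ₂ : ξ₂ ∈ Icc (-1:ℝ) 1)
    (l₁ l₂ : ℝ)
    (h1 : l₁ * (f1 ξ₁) ^ 2 + l₂ * (f1 ξ₂) ^ 2 = 1)
    (h2 : l₁ * (f2 a A B ξ₁) ^ 2 + l₂ * (f2 a A B ξ₂) ^ 2 = a ^ 2 + A ^ 2 / 2 + B ^ 2 / 2)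
    (h3 : l₁ * f1 ξ₁ * f2 a A B ξ₁ + l₂ * f1 ξ₂ * f2 a A B ξ₂ = 0)
    (hv1 : f1 ξ₁ = 1) (hv2 : f1 ξ₂ = 1) (hopp : f2 a A B ξ₁ = -(f2 a A B ξ₂)) :
    l₁ = 1/2 ∧ l₂ = 1/2 ∧ (f2 a A B ξ₁) ^ 2 = a ^ 2 + A ^ 2 / 2 + B ^ 2 / 2 ∧ False :=
  two_point_opposite_values_contradiction_general a A B hcond ξ₁ ξ₂ l₁ l₂ h1 h2 h3 hv1 hv2 hopp
end
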